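/- arXiv:1801.04080 — 4 statements merged into one kernel-verified Lean document; each statement's English description precedes it below -/
import Mathlib

section
/- Let c : ℝ → ℝ be twice differentiable with deriv (deriv c) x > 0 for all x > 0 and with strictly monotone increasing derivative, let θ_H > θ_L > 0, and let μ^L > 0 with deriv c μ^L > 0. If μ^{H,L} satisfies deriv c μ^{H,L} = (θ_H/θ_L) · deriv c μ^L, then the information rent is strictly positive: μ^{H,L} · deriv c μ^{H,L} − c μ^{H,L} > μ^L · deriv c μ^L − c μ^L. -/
/-- The information rent is strictly positive: the high type's surplus on the low
type's contract exceeds the low type's surplus. -/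
theorem information_rent_positive
    (c : ℝ → ℝ) (hc : Differentiable ℝ c) (hc' : Differentiable ℝ (deriv c))
    (hcc : ∀ x : ℝ, x > 0 → deriv (deriv c) x > 0) (hmono : StrictMono (deriv c))
    (θH θL : ℝ) (hθ : θH > θL) (hθL : θL > 0)
    (μL μHL : ℝ) (hμLpos : μL > 0) (hμL : deriv c μL > 0)
    (hfoc : deriv c μHL = (θH / θL) * deriv c μL) :
    μHL * deriv c μHL - c μHL > μL * deriv c μL - c μL := by
  set g : ℝ → ℝ := fun x => x * deriv c x - c x with hg
  have hgd : ∀ x : ℝ, HasDerivAt g (x * deriv (deriv c) x) x := by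
    intro x
    have h1 : HasDerivAt (fun x : ℝ => x * deriv c x)
        (1 * deriv c x + x * deriv (deriv c) x) x :=
      (hasDerivAt_id x).mul (hc' x).hasDerivAt
    have := h1.sub (hc x).hasDerivAt
    simpa [hg, Pi.sub_def] using this
  have hratio : (1 : ℝ) < θH / θL := (one_lt_div hθL).mpr hθ
  have hlt : μL < μHL := by
    apply hmono.lt_iff_lt.mp
    rw [hfoc]
    nlinarith
  have hsm : StrictMonoOn g (Set.Ici 0) := by
    apply strictMonoOn_of_deriv_pos (convex_Ici 0)
    · exact (Continuous.sub ((continuous_id.mul hc'.continuous)) hc.continuous).continuousOn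
    · intro x hx
      rw [interior_Ici] at hx
      rw [(hgd x).deriv]
      exact mul_pos hx (hcc x hx)
  exact hsm (le_of_lt hμLpos) (le_of_lt (hμLpos.trans hlt)) hlt
end

section
/- Let ρ > 0 and let U : ℝ → ℝ be the CARA utility U(x) = 1 − exp(−ρ·x). Let c : ℝ → ℝ be twice differentiable with deriv (deriv c) x > 0 for all x > 0 and strictly monotone increasing derivative, let θ_H > θ_L > 0, let μ^L > 0 with deriv c μ^L > 0, and let μ^{H,L} satisfy deriv c μ^{H,L} = (θ_H/θ_L) · deriv c μ^L. Then for any reservation certainty equivalent w_L ∈ ℝ, U(w_L + (μ^{H,L} · deriv c μ^{H,L} − c μ^{H,L}) − (μ^L · deriv c μ^L − c μ^L)) > U(w_L): the high-productivity agent derives strictly greater utility from the low type's contract than the low-productivity agent. -/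
/-- The high-productivity agent derives strictly greater CARA utility from the
low type's contract than the low-productivity agent. -/
theorem high_type_utility_greater
    (ρ : ℝ) (hρ : ρ > 0) (U : ℝ → ℝ) (hU : ∀ x, U x = 1 - Real.exp (-ρ * x))
    (c : ℝ → ℝ) (hc : Differentiable ℝ c) (hc' : Differentiable ℝ (deriv c))
    (hcc : ∀ x : ℝ, x > 0 → deriv (deriv c) x > 0) (hmono : StrictMono (deriv c))
    (θH θL : ℝ) (hθ : θH > θL) (hθL : θL > 0)
    (μL μHL : ℝ) (hμLpos : μL > 0) (hμL : deriv c μL > 0)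
    (hfoc : deriv c μHL = (θH / θL) * deriv c μL)
    (wL : ℝ) :
    U (wL + (μHL * deriv c μHL - c μHL) - (μL * deriv c μL - c μL)) > U wL := by
  -- μHL > μL
  have hratio : (1 : ℝ) < θH / θL := (one_lt_div hθL).mpr hθ
  have hder : deriv c μL < deriv c μHL := by
    rw [hfoc]
    nlinarith
  have hμ : μL < μHL := hmono.lt_iff_lt.mp hder
  -- the rent function g
  set g : ℝ → ℝ := fun x => x * deriv c x - c x with hg
  have hgd : ∀ x, HasDerivAt g (x * deriv (deriv c) x) x := by
    intro x
    have h1 : HasDerivAt (fun x => x * deriv c x) (1 * deriv c x + x * deriv (deriv c) x) x :=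
      (hasDerivAt_id x).mul (hc' x).hasDerivAt
    have h2 : HasDerivAt c (deriv c x) x := (hc x).hasDerivAt
    have := h1.sub h2
    exact this.congr_deriv (by ring)
  have hgmono : StrictMonoOn g (Set.Ici (0 : ℝ)) := by
    apply strictMonoOn_of_deriv_pos (convex_Ici 0)
    · exact Continuous.continuousOn (by
        have : Continuous g := by
          have := fun x => (hgd x).differentiableAt
          exact (Differentiable.continuous (fun x => (hgd x).differentiableAt))
        exact this)
    · intro x hx
      rw [interior_Ici] at hx
      rw [(hgd x).deriv]
      exact mul_pos hx (hcc x hx)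
  have hgΔ : g μL < g μHL :=
    hgmono (Set.mem_Ici.mpr hμLpos.le) (Set.mem_Ici.mpr (hμLpos.trans hμ).le) hμ
  have hΔ : 0 < (μHL * deriv c μHL - c μHL) - (μL * deriv c μL - c μL) := by
    simpa [hg] using sub_pos.mpr hgΔ
  rw [hU, hU]
  have : Real.exp (-ρ * (wL + (μHL * deriv c μHL - c μHL) - (μL * deriv c μL - c μL)))
      < Real.exp (-ρ * wL) := by
    apply Real.exp_lt_exp.mpr
    nlinarith
  linarith
end

section
/- Let c : ℝ → ℝ be twice differentiable with deriv (deriv c) x > 0 for all x > 0 and with strictly monotone increasing derivative, let θ_H > θ_L > 0, and let μ^H > 0 with deriv c μ^H > 0. If μ^{L,H} > 0 satisfies deriv c μ^{L,H} = (θ_L/θ_H) · deriv c μ^H, then μ^{L,H} · deriv c μ^{L,H} − c μ^{L,H} < μ^H · deriv c μ^H − c μ^H: the low-productivity agent derives strictly smaller surplus from the high type's contract than the high-productivity agent. -/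
/-- The low-productivity agent derives strictly smaller surplus from the high
type's contract than the high-productivity agent. -/
theorem low_type_rent_smaller
    (c : ℝ → ℝ) (hc : Differentiable ℝ c) (hc' : Differentiable ℝ (deriv c))
    (hcc : ∀ x : ℝ, x > 0 → deriv (deriv c) x > 0) (hmono : StrictMono (deriv c))
    (θH θL : ℝ) (hθ : θH > θL) (hθL : θL > 0)
    (μH μLH : ℝ) (hμHpos : μH > 0) (hμH : deriv c μH > 0) (hμLHpos : μLH > 0)
    (hfoc : deriv c μLH = (θL / θH) * deriv c μH) :
    μLH * deriv c μLH - c μLH < μH * deriv c μH - c μH := by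
  have hμlt : μLH < μH := by
    apply hmono.lt_iff_lt.mp
    rw [hfoc]
    have hratio : θL / θH < 1 := (div_lt_one (lt_trans hθL hθ)).mpr hθ
    nlinarith
  set g : ℝ → ℝ := fun x => x * deriv c x - c x with hg
  have hgd : Differentiable ℝ g := by
    exact (differentiable_id.mul hc').sub hc
  have hgderiv : ∀ x : ℝ, deriv g x = x * deriv (deriv c) x := by
    intro x
    have h1 : HasDerivAt (fun y : ℝ => y * deriv c y)
        (1 * deriv c x + x * deriv (deriv c) x) x :=
      (hasDerivAt_id x).mul (hc' x).hasDerivAt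
    have h2 : HasDerivAt g (1 * deriv c x + x * deriv (deriv c) x - deriv c x) x :=
      h1.sub (hc x).hasDerivAt
    have := h2.deriv
    rw [this]; ring
  have hsm : StrictMonoOn g (Set.Icc μLH μH) := by
    apply strictMonoOn_of_deriv_pos (convex_Icc _ _) hgd.continuous.continuousOn
    intro x hx
    rw [interior_Icc] at hx
    rw [hgderiv]
    exact mul_pos (lt_trans hμLHpos hx.1) (hcc x (lt_trans hμLHpos hx.1))
  exact hsm (Set.left_mem_Icc.mpr hμlt.le) (Set.right_mem_Icc.mpr hμlt.le) hμlt
end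

section
/- Under the hypotheses of the Hamiltonian derivative formula (c twice differentiable; θ_H, θ_L, ρ, σ > 0; h differentiable at μ⋆ with deriv c (h x) = (θ_H/θ_L)·deriv c x near μ⋆), assume α ∈ (0,1), that deriv 𝓗 μ⋆ = 0, and that 1 + (ρ·σ²/θ_L²)·deriv (deriv c) μ⋆ ≠ 0. Then deriv c μ⋆ = (θ_L − (α/(1−α))·(deriv (deriv c) (h μ⋆) · h μ⋆ · deriv h μ⋆ − deriv (deriv c) μ⋆ · μ⋆)) / (1 + (ρ·σ²/θ_L²)·deriv (deriv c) μ⋆). -/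
/-- First-order characterization (Equation (5)) of the distorted optimal
low-type effort `μ⋆`. -/
theorem low_type_effort_foc
    (c : ℝ → ℝ) (hc : Differentiable ℝ c) (hc' : Differentiable ℝ (deriv c))
    (θH θL ρ σ : ℝ) (hθH : θH > 0) (hθL : θL > 0) (hρ : ρ > 0) (hσ : σ > 0)
    (α : ℝ) (hα : α ∈ Set.Ioo (0 : ℝ) 1)
    (h : ℝ → ℝ) (μstar : ℝ) (hdiff : DifferentiableAt ℝ h μstar)
    (himp : ∀ᶠ x in nhds μstar, deriv c (h x) = (θH / θL) * deriv c x)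
    (𝓗 : ℝ → ℝ)
    (h𝓗 : ∀ x, 𝓗 x = -α * (deriv c (h x) * h x - c (h x) - (deriv c x * x - c x))
        + (1 - α) * (x * θL - c x - (ρ * σ ^ 2 / 2) * (deriv c x / θL) ^ 2))
    (hcrit : deriv 𝓗 μstar = 0)
    (hden : 1 + (ρ * σ ^ 2 / θL ^ 2) * deriv (deriv c) μstar ≠ 0) :
    deriv c μstar =
      (θL - (α / (1 - α)) * (deriv (deriv c) (h μstar) * h μstar * deriv h μstar
          - deriv (deriv c) μstar * μstar))
        / (1 + (ρ * σ ^ 2 / θL ^ 2) * deriv (deriv c) μstar) := by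
  have hh : HasDerivAt h (deriv h μstar) μstar := hdiff.hasDerivAt
  have hc1 : HasDerivAt c (deriv c μstar) μstar := (hc μstar).hasDerivAt
  have hc2 : HasDerivAt (deriv c) (deriv (deriv c) μstar) μstar := (hc' μstar).hasDerivAt
  have him0 : deriv c (h μstar) = (θH / θL) * deriv c μstar := himp.self_of_nhds
  -- derivative of x ↦ deriv c (h x), two ways
  have hg : HasDerivAt (fun x => deriv c (h x)) ((θH / θL) * deriv (deriv c) μstar) μstar := by
    have h1 : HasDerivAt (fun x => (θH / θL) * deriv c x)
        ((θH / θL) * deriv (deriv c) μstar) μstar := hc2.const_mul _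
    exact h1.congr_of_eventuallyEq himp
  have hg2 : HasDerivAt (fun x => deriv c (h x))
      (deriv (deriv c) (h μstar) * deriv h μstar) μstar :=
    ((hc' (h μstar)).hasDerivAt).comp μstar hh
  have hkey : deriv (deriv c) (h μstar) * deriv h μstar = (θH / θL) * deriv (deriv c) μstar :=
    hg2.unique hg
  -- derivative of x ↦ c (h x)
  have hch : HasDerivAt (fun x => c (h x)) (deriv c (h μstar) * deriv h μstar) μstar :=
    ((hc (h μstar)).hasDerivAt).comp μstar hh
  -- assemble
  have hF := (HasDerivAt.const_mul (-α)
      (((hg.mul hh).sub hch).sub ((hc2.mul (hasDerivAt_id μstar)).sub hc1))).add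
      (HasDerivAt.const_mul (1 - α)
        ((((hasDerivAt_id μstar).mul_const θL).sub hc1).sub
          (HasDerivAt.const_mul (ρ * σ ^ 2 / 2) ((hc2.div_const θL).pow 2))))
  have hHd := hF.congr_of_eventuallyEq (Filter.Eventually.of_forall h𝓗)
  have heq := hHd.deriv
  rw [hcrit] at heq
  -- algebra
  have hα1 : (1 : ℝ) - α ≠ 0 := by have := hα.2; linarith
  have hθL' : θL ≠ 0 := ne_of_gt hθL
  have hkey' : deriv (deriv c) (h μstar) * h μstar * deriv h μstar
      = θH / θL * deriv (deriv c) μstar * h μstar := by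
    rw [mul_right_comm, hkey]
  rw [hkey', eq_div_iff hden]
  simp only [id_eq, Nat.reduceSub, pow_one, Nat.cast_ofNat] at heq
  field_simp at heq ⊢
  linear_combination heq
end
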